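/- arXiv:2212.08100 — 5 statements merged into one kernel-verified Lean document; each statement's English description precedes it below -/
import Mathlib

section
/- Let m ≥ 1, let α_1, ..., α_m be positive real numbers and let b_0, b_1, ..., b_m be positive real numbers; set c_j = b_j/b_0 for j ∈ {1, ..., m}. Let A^N be the (m+1)×(m+1) complex matrix with rows and columns indexed by 0, 1, ..., m whose entries are: A_{00} = Σ_{k=1}^m α_k b_k b_0^{-1}; A_{0j} = −α_j b_j b_0^{-1} for j ∈ {1, ..., m}; A_{j0} = −α_j and A_{jj} = α_j for j ∈ {1, ..., m}; and A_{ji} = 0 for i, j ∈ {1, ..., m} with i ≠ j. Then for every λ ∈ ℂ one has the characteristic polynomial identity det(λ·I_{m+1} − A^N) = λ · ( Π_{j=1}^m (λ − α_j) − Σ_{j=1}^m c_j α_j Π_{i ∈ {1,...,m}, i ≠ j} (λ − α_i) ). -/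
/-!
The matrix factors as `A = P * Q`, where `Q` is the signed incidence matrix of the star graph on
`{0, …, m}` with centre `0` (row `j` is `e_{j+1} - e_0`) and column `k` of `P` is
`α_k e_{k+1} - c_k α_k e_0`. Sylvester's identity `χ_{PQ} = X χ_{QP}` reduces the problem to the
`m × m` matrix `QP = diag α + 𝟙 wᵀ` with `w_k = c_k α_k`, a rank-one perturbation of a diagonal
matrix. Its characteristic polynomial comes from the matrix determinant lemma, applied over the
fraction field of `R[X]`, where every `X - α_j` is invertible.
-/

open Matrix Polynomial Finset

variable {n : Type*} [Fintype n] [DecidableEq n]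

theorem Matrix.det_diagonal_add_vecMulVec_of_isUnit {R : Type*} [CommRing R] {d : n → R}
    (hd : ∀ i, IsUnit (d i)) (u v : n → R) :
    (diagonal d + vecMulVec u v).det = ∏ i, d i + ∑ j, u j * v j * ∏ i ∈ univ.erase j, d i := by
  let x : n → R := fun i => ↑(hd i).unit⁻¹ * u i
  have hfactor : diagonal d + vecMulVec u v = diagonal d * (1 + vecMulVec x v) := by
    rw [Matrix.mul_add, Matrix.mul_one, mul_vecMulVec]
    congr 2
    funext i
    rw [mulVec_diagonal, ← mul_assoc, (hd i).mul_val_inv, one_mul]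
  rw [hfactor, det_mul, det_diagonal, vecMulVec_eq Unit, det_one_add_replicateCol_mul_replicateRow,
    mul_add, mul_one, dotProduct, Finset.mul_sum]
  congr 1
  refine Finset.sum_congr rfl fun j _ => ?_
  rw [← Finset.mul_prod_erase univ d (mem_univ j)]
  linear_combination (u j * v j * ∏ i ∈ univ.erase j, d i) * (hd j).mul_val_inv

theorem Matrix.det_diagonal_add_vecMulVec {R : Type*} [CommRing R] [IsDomain R] {d : n → R}
    (hd : ∀ i, d i ≠ 0) (u v : n → R) :
    (diagonal d + vecMulVec u v).det = ∏ i, d i + ∑ j, u j * v j * ∏ i ∈ univ.erase j, d i := by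
  let f := algebraMap R (FractionRing R)
  have hf : Function.Injective f := IsFractionRing.injective R (FractionRing R)
  apply hf
  have hmap :
      (diagonal d + vecMulVec u v).map f = diagonal (f ∘ d) + vecMulVec (f ∘ u) (f ∘ v) := by
    ext i j
    by_cases hij : i = j <;> simp [hij, vecMulVec_apply]
  have hunit : ∀ i, IsUnit ((f ∘ d) i) := fun i => ((map_ne_zero_iff f hf).2 (hd i)).isUnit
  rw [RingHom.map_det, RingHom.mapMatrix_apply, hmap, det_diagonal_add_vecMulVec_of_isUnit hunit]
  simp

theorem Matrix.charpoly_diagonal_add_vecMulVec {R : Type*} [CommRing R] [IsDomain R]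
    (a u v : n → R) :
    (diagonal a + vecMulVec u v).charpoly =
      ∏ i, (X - C (a i)) - ∑ j, C (u j * v j) * ∏ i ∈ univ.erase j, (X - C (a i)) := by
  have hchar : charmatrix (diagonal a + vecMulVec u v) =
      diagonal (fun i => X - C (a i)) + vecMulVec (C ∘ u) (-(C ∘ v)) := by
    ext i j : 1
    simp only [charmatrix_apply, Matrix.add_apply, diagonal_apply, vecMulVec_apply,
      Function.comp_apply, Pi.neg_apply]
    split_ifs <;> simp only [map_add, map_mul, map_zero] <;> ring
  rw [charpoly, hchar, det_diagonal_add_vecMulVec fun i => X_sub_C_ne_zero (a i), sub_eq_add_neg,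
    ← sum_neg_distrib]
  simp [C_mul]

section Star

variable {R : Type*} [CommRing R] {m : ℕ}

variable (R m) in
def starIncidence : Matrix (Fin m) (Fin (m + 1)) R :=
  of fun j => Fin.cons (-1) (Pi.single j 1)

def starIncidenceWeighted (α w : Fin m → R) : Matrix (Fin (m + 1)) (Fin m) R :=
  of fun i k => (Fin.cons (-w k) (Pi.single k (α k)) : Fin (m + 1) → R) i

theorem starIncidence_mul_starIncidenceWeighted (α w : Fin m → R) :
    starIncidence R m * starIncidenceWeighted α w = diagonal α + vecMulVec 1 w := by
  ext j k
  by_cases hjk : j = k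
  · subst hjk
    simp [starIncidence, starIncidenceWeighted, mul_apply, Fin.sum_univ_succ, Pi.single_apply,
      add_comm]
  · simp [starIncidence, starIncidenceWeighted, mul_apply, Fin.sum_univ_succ, Pi.single_apply, hjk,
      Ne.symm hjk]

theorem charpoly_starIncidenceWeighted_mul_starIncidence [IsDomain R] (α w : Fin m → R) :
    (starIncidenceWeighted α w * starIncidence R m).charpoly =
      X * (∏ j, (X - C (α j)) - ∑ j, C (w j) * ∏ i ∈ univ.erase j, (X - C (α i))) := by
  rw [charpoly_mul_comm_of_le _ _ (by simp), starIncidence_mul_starIncidenceWeighted,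
    charpoly_diagonal_add_vecMulVec]
  simp

theorem eq_starIncidenceWeighted_mul_starIncidence {α w : Fin m → R}
    {A : Matrix (Fin (m + 1)) (Fin (m + 1)) R} (h00 : A 0 0 = ∑ k, w k)
    (h0j : ∀ j, A 0 j.succ = -w j) (hj0 : ∀ j, A j.succ 0 = -α j)
    (hjj : ∀ j, A j.succ j.succ = α j)
    (hji : ∀ i j : Fin m, i ≠ j → A j.succ i.succ = 0) :
    A = starIncidenceWeighted α w * starIncidence R m := by
  ext i k
  cases i using Fin.cases with
  | zero =>
    cases k using Fin.cases <;>
      simp [starIncidenceWeighted, starIncidence, mul_apply, Pi.single_apply, h00, h0j]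
  | succ j =>
    cases k using Fin.cases with
    | zero => simp [starIncidenceWeighted, starIncidence, mul_apply, Pi.single_apply, hj0]
    | succ k =>
      by_cases hjk : j = k
      · subst hjk
        simp [starIncidenceWeighted, starIncidence, mul_apply, Pi.single_apply, hjj]
      · simp [starIncidenceWeighted, starIncidence, mul_apply, Pi.single_apply, hjk,
          hji k j (Ne.symm hjk)]

end Star

theorem matrix_AN_char_poly_general
    (m : ℕ) (α : Fin m → ℝ) (b : Fin (m + 1) → ℝ) (c : Fin m → ℝ)
    (hc : ∀ j, c j = b j.succ / b 0)
    (A : Matrix (Fin (m + 1)) (Fin (m + 1)) ℂ)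
    (hA00 : A 0 0 = ∑ k : Fin m, (α k : ℂ) * (b k.succ : ℂ) * (b 0 : ℂ)⁻¹)
    (hA0j : ∀ j : Fin m, A 0 j.succ = -((α j : ℂ) * (b j.succ : ℂ) * (b 0 : ℂ)⁻¹))
    (hAj0 : ∀ j : Fin m, A j.succ 0 = -(α j : ℂ))
    (hAjj : ∀ j : Fin m, A j.succ j.succ = (α j : ℂ))
    (hAji : ∀ i j : Fin m, i ≠ j → A j.succ i.succ = 0) :
    ∀ lam : ℂ,
      Matrix.det (lam • (1 : Matrix (Fin (m + 1)) (Fin (m + 1)) ℂ) - A) =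
        lam * (∏ j : Fin m, (lam - (α j : ℂ)) -
          ∑ j : Fin m, (c j : ℂ) * (α j : ℂ) *
            ∏ i ∈ Finset.univ.erase j, (lam - (α i : ℂ))) := by
  have hw : ∀ j, (α j : ℂ) * (b j.succ : ℂ) * (b 0 : ℂ)⁻¹ = (c j : ℂ) * α j := fun j => by
    rw [hc j]; push_cast; ring
  have hA : A = starIncidenceWeighted (fun j => (α j : ℂ)) (fun j => (c j : ℂ) * α j) *
      starIncidence ℂ m := by
    simp only [hw] at hA00 hA0j
    exact eq_starIncidenceWeighted_mul_starIncidence hA00 hA0j hAj0 hAjj hAji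
  intro lam
  have h := congrArg (eval lam) (charpoly_starIncidenceWeighted_mul_starIncidence
    (fun j => (α j : ℂ)) (fun j => (c j : ℂ) * α j))
  rw [eval_charpoly, ← hA, scalar_apply, ← smul_one_eq_diagonal] at h
  simpa [eval_prod, eval_finsetSum] using h

theorem matrix_AN_char_poly
    (m : ℕ) (hm : 1 ≤ m) (α : Fin m → ℝ) (b : Fin (m + 1) → ℝ) (c : Fin m → ℝ)
    (hαpos : ∀ j, 0 < α j) (hbpos : ∀ j, 0 < b j)
    (hc : ∀ j, c j = b j.succ / b 0)
    (A : Matrix (Fin (m + 1)) (Fin (m + 1)) ℂ)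
    (hA00 : A 0 0 = ∑ k : Fin m, (α k : ℂ) * (b k.succ : ℂ) * (b 0 : ℂ)⁻¹)
    (hA0j : ∀ j : Fin m, A 0 j.succ = -((α j : ℂ) * (b j.succ : ℂ) * (b 0 : ℂ)⁻¹))
    (hAj0 : ∀ j : Fin m, A j.succ 0 = -(α j : ℂ))
    (hAjj : ∀ j : Fin m, A j.succ j.succ = (α j : ℂ))
    (hAji : ∀ i j : Fin m, i ≠ j → A j.succ i.succ = 0) :
    ∀ lam : ℂ,
      Matrix.det (lam • (1 : Matrix (Fin (m + 1)) (Fin (m + 1)) ℂ) - A) =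
        lam * (∏ j : Fin m, (lam - (α j : ℂ)) -
          ∑ j : Fin m, (c j : ℂ) * (α j : ℂ) *
            ∏ i ∈ Finset.univ.erase j, (lam - (α i : ℂ))) :=
  matrix_AN_char_poly_general m α b c hc A hA00 hA0j hAj0 hAjj hAji
end

section
/- Let m ≥ 1, let 0 < α_1 < α_2 < ... < α_m be real numbers and let b_0, b_1, ..., b_m be positive real numbers; set c_j = b_j/b_0 and define F(λ) = 1 + Σ_{j=1}^m c_j α_j/(α_j − λ) for λ ∈ ℝ \ {α_1, ..., α_m}. Let A^N be the (m+1)×(m+1) complex matrix with rows and columns indexed by 0, 1, ..., m whose entries are: A_{00} = Σ_{k=1}^m α_k b_k b_0^{-1}; A_{0j} = −α_j b_j b_0^{-1} for j ∈ {1, ..., m}; A_{j0} = −α_j and A_{jj} = α_j for j ∈ {1, ..., m}; and A_{ji} = 0 for i, j ∈ {1, ..., m} with i ≠ j. Then A^N has exactly m+1 distinct eigenvalues, all of them real, and the set of eigenvalues of A^N equals {0} ∪ {λ ∈ ℝ \ {α_1, ..., α_m} : F(λ) = 0}. -/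
/-!
Expanding `det (z - A)` through the Schur complement of the diagonal block gives
`charpoly A = X * h` with `h = ∏ (X - α_j) - ∑ w_j ∏_{k ≠ j} (X - α_k)`, `w_j = c_j α_j`, and
`h(λ) = ∏ (λ - α_j) · F(λ)` away from the poles. Since `h(α_j) = -w_j ∏_{k ≠ j} (α_j - α_k)`,
consecutive nodes give values of opposite signs, and `h` is monic with `h(α_m) < 0`; by the
intermediate value theorem `h` has a root in each gap `(α_j, α_{j+1})` and one beyond `α_m`.
These are `m` distinct real roots of a polynomial of degree `m`, hence all its complex roots;
none is a pole, and none is `0` because `F > 0` on `(-∞, α_1)`.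
-/

open Polynomial Finset Matrix

/-- `∏ (X - a_j) · (1 + ∑ w_j / (a_j - X))` with the poles cleared. -/
noncomputable def secularPoly {R : Type*} [CommRing R] {m : ℕ} (a w : Fin m → R) : R[X] :=
  Lagrange.nodal univ a - ∑ j, w j • Lagrange.nodal (univ.erase j) a

section Secular

variable {R : Type*} [CommRing R] {m : ℕ} (a w : Fin m → R)

theorem eval_secularPoly (z : R) :
    (secularPoly a w).eval z =
      ∏ j, (z - a j) - ∑ j, w j * ∏ k ∈ univ.erase j, (z - a k) := by
  simp [secularPoly, eval_finsetSum, Lagrange.eval_nodal]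

theorem eval_secularPoly_node (j : Fin m) :
    (secularPoly a w).eval (a j) = -(w j * ∏ k ∈ univ.erase j, (a j - a k)) := by
  rw [eval_secularPoly, prod_eq_zero (mem_univ j) (sub_self _), zero_sub,
    sum_eq_single_of_mem j (mem_univ j) fun i _ hij => ?_]
  rw [prod_eq_zero (mem_erase.2 ⟨hij.symm, mem_univ j⟩) (sub_self _), mul_zero]

theorem map_secularPoly {S : Type*} [CommRing S] (f : R →+* S) :
    (secularPoly a w).map f = secularPoly (f ∘ a) (f ∘ w) := by
  simp [secularPoly, Polynomial.map_sum, Lagrange.nodal_eq, Polynomial.map_prod]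

variable [Nontrivial R]

theorem degree_sum_smul_nodal_erase_lt :
    (∑ j, w j • Lagrange.nodal (univ.erase j) a).degree < (Lagrange.nodal univ a).degree := by
  rw [Lagrange.degree_nodal, card_univ, Fintype.card_fin]
  refine (degree_sum_le _ _).trans_lt
    ((Finset.sup_lt_iff (WithBot.bot_lt_coe m)).2 fun j _ => ?_)
  calc (w j • Lagrange.nodal (univ.erase j) a).degree
      ≤ (Lagrange.nodal (univ.erase j) a).degree := degree_smul_le _ _
    _ = (m - 1 : ℕ) := by
      rw [Lagrange.degree_nodal, card_erase_of_mem (mem_univ j), card_univ, Fintype.card_fin]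
    _ < m := by exact_mod_cast Nat.sub_lt j.pos one_pos

theorem secularPoly_monic : (secularPoly a w).Monic :=
  Lagrange.nodal_monic.sub_of_left (degree_sum_smul_nodal_erase_lt a w)

theorem degree_secularPoly : (secularPoly a w).degree = m := by
  rw [secularPoly, degree_sub_eq_left_of_degree_lt (degree_sum_smul_nodal_erase_lt a w),
    Lagrange.degree_nodal, card_univ, Fintype.card_fin]

theorem natDegree_secularPoly : (secularPoly a w).natDegree = m :=
  natDegree_eq_of_degree_eq_some (degree_secularPoly a w)

end Secular

section Field

variable {K : Type*} [Field K] {m : ℕ}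

theorem eval_secularPoly_of_ne (a w : Fin m → K) {z : K} (hz : ∀ j, z ≠ a j) :
    (secularPoly a w).eval z = (∏ j, (z - a j)) * (1 + ∑ j, w j / (a j - z)) := by
  rw [eval_secularPoly, mul_add, mul_one, mul_sum, sub_eq_add_neg, ← sum_neg_distrib]
  congr 1
  refine sum_congr rfl fun j _ => ?_
  have hj : a j - z ≠ 0 := sub_ne_zero.2 (hz j).symm
  rw [← mul_prod_erase _ _ (mem_univ j)]
  field_simp
  ring

theorem isRoot_secularPoly_iff {a w : Fin m → K} (ha : Function.Injective a)
    (hw : ∀ j, w j ≠ 0) {x : K} :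
    (secularPoly a w).IsRoot x ↔ (∀ j, x ≠ a j) ∧ 1 + ∑ j, w j / (a j - x) = 0 := by
  constructor
  · intro hroot
    have hx : ∀ j, x ≠ a j := by
      rintro j rfl
      rw [IsRoot, eval_secularPoly_node, neg_eq_zero] at hroot
      refine mul_ne_zero (hw j) (prod_ne_zero_iff.2 fun k hk => sub_ne_zero.2 ?_) hroot
      exact ha.ne (ne_of_mem_erase hk).symm
    have hprod : ∏ j, (x - a j) ≠ 0 := prod_ne_zero_iff.2 fun j _ => sub_ne_zero.2 (hx j)
    rw [IsRoot, eval_secularPoly_of_ne a w hx] at hroot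
    exact ⟨hx, (mul_eq_zero.1 hroot).resolve_left hprod⟩
  · rintro ⟨hx, hF⟩
    rw [IsRoot, eval_secularPoly_of_ne a w hx, hF, mul_zero]

end Field

theorem det_arrowhead {K : Type*} [Field K] {n : ℕ} (M : Matrix (Fin (n + 1)) (Fin (n + 1)) K)
    (hoff : ∀ i j : Fin n, i ≠ j → M j.succ i.succ = 0) (hdiag : ∀ j : Fin n, M j.succ j.succ ≠ 0) :
    M.det = (∏ j : Fin n, M j.succ j.succ) *
      (M 0 0 - ∑ j : Fin n, M 0 j.succ * M j.succ 0 / M j.succ j.succ) := by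
  set d : Fin n → K := fun j => M j.succ j.succ
  let e : Fin n ⊕ Unit ≃ Fin (n + 1) :=
    (Equiv.optionEquivSumPUnit _).symm.trans (finSuccEquiv n).symm
  have hblocks : M.submatrix e e = fromBlocks (diagonal d) (of fun i _ => M i.succ 0)
      (of fun _ j => M 0 j.succ) (of fun _ _ => M 0 0) := by
    ext (i | i) (j | j)
    · by_cases hij : i = j
      · subst hij; simp [e, d]
      · simp [e, hij, hoff j i (Ne.symm hij)]
    all_goals simp [e]
  have hinv : diagonal d * diagonal d⁻¹ = 1 := by
    rw [diagonal_mul_diagonal, ← diagonal_one]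
    exact congrArg diagonal (funext fun j => mul_inv_cancel₀ (hdiag j))
  let := invertibleOfRightInverse _ _ hinv
  rw [← det_submatrix_equiv_self e, hblocks, det_fromBlocks₁₁, invOf_eq_right_inv hinv,
    det_diagonal, det_unique]
  simp [mul_apply, diagonal_apply, d, div_eq_mul_inv, mul_right_comm]

theorem charpoly_arrowhead {K : Type*} [Field K] [Infinite K] {n : ℕ} (a w : Fin n → K)
    (A : Matrix (Fin (n + 1)) (Fin (n + 1)) K) (h00 : A 0 0 = ∑ k, w k)
    (h0j : ∀ j, A 0 j.succ = -w j) (hj0 : ∀ j, A j.succ 0 = -a j)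
    (hjj : ∀ j, A j.succ j.succ = a j) (hoff : ∀ i j : Fin n, i ≠ j → A j.succ i.succ = 0) :
    A.charpoly = X * secularPoly a w := by
  refine eq_of_infinite_eval_eq _ _ ((Set.finite_range a).infinite_compl.mono fun z hz => ?_)
  have hz' : ∀ j, z ≠ a j := fun j h => hz ⟨j, h.symm⟩
  have hza : ∀ j, z - a j ≠ 0 := fun j => sub_ne_zero.2 (hz' j)
  have hschur : z - ∑ k, w k - ∑ j, w j * a j / (z - a j) = z * (1 + ∑ j, w j / (a j - z)) := by
    rw [mul_add, mul_one, mul_sum, sub_sub, ← sum_add_distrib, sub_eq_add_neg, ← sum_neg_distrib]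
    congr 1
    refine sum_congr rfl fun j _ => ?_
    have := hza j
    have : a j - z ≠ 0 := sub_ne_zero.2 (hz' j).symm
    field_simp
    ring
  show eval z A.charpoly = eval z (X * secularPoly a w)
  rw [eval_charpoly, det_arrowhead, eval_mul, eval_X, eval_secularPoly_of_ne _ _ hz']
  · rw [mul_left_comm z]
    congr 1 <;> simp [h00, h0j, hj0, hjj, diagonal_apply_ne _ (Fin.succ_ne_zero _).symm, hschur]
  · intro i j hij
    simp [hoff i j hij, hij.symm]
  · intro j
    simpa [hjj] using hza j

theorem exists_mem_Ioo_eq_zero_of_mul_neg {α : Type*} [ConditionallyCompleteLinearOrder α]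
    [TopologicalSpace α] [OrderTopology α] [DenselyOrdered α] {f : α → ℝ} {x y : α}
    (hxy : x ≤ y) (hf : ContinuousOn f (Set.Icc x y)) (h : f x * f y < 0) :
    ∃ z ∈ Set.Ioo x y, f z = 0 := by
  rcases mul_neg_iff.1 h with ⟨hx, hy⟩ | ⟨hx, hy⟩
  · exact intermediate_value_Ioo' hxy hf ⟨hy, hx⟩
  · exact intermediate_value_Ioo hxy hf ⟨hx, hy⟩

section Interlacing

variable {n : ℕ} {a w : Fin (n + 1) → ℝ}

theorem eval_secularPoly_castSucc_mul_eval_succ_neg (ha : StrictMono a) (hw : ∀ j, 0 < w j)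
    (k : Fin n) :
    (secularPoly a w).eval (a k.castSucc) * (secularPoly a w).eval (a k.succ) < 0 := by
  set i := k.castSucc
  set j := k.succ
  have hij : i < j := Fin.castSucc_lt_succ
  set s := (univ.erase i).erase j
  -- no node lies strictly between the consecutive nodes `a i` and `a j`
  have hsameSide : ∀ l ∈ s, 0 < (a i - a l) * (a j - a l) := by
    intro l hl
    simp only [s, mem_erase, mem_univ, and_true] at hl
    rcases lt_or_gt_of_ne hl.2 with hli | hil
    · exact mul_pos (sub_pos.2 (ha hli)) (sub_pos.2 (ha (hli.trans hij)))
    · have hjl : j < l := (Fin.castSucc_lt_iff_succ_le.1 hil).lt_of_ne' hl.1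
      exact mul_pos_of_neg_of_neg (sub_neg.2 (ha (hij.trans hjl))) (sub_neg.2 (ha hjl))
  have hsplit : (secularPoly a w).eval (a i) * (secularPoly a w).eval (a j) =
      -(w i * w j * (a i - a j) ^ 2 * ∏ l ∈ s, (a i - a l) * (a j - a l)) := by
    rw [eval_secularPoly_node, eval_secularPoly_node,
      ← mul_prod_erase (univ.erase i) _ (mem_erase.2 ⟨hij.ne', mem_univ j⟩),
      ← mul_prod_erase (univ.erase j) _ (mem_erase.2 ⟨hij.ne, mem_univ i⟩),
      erase_right_comm (a := j) (b := i), prod_mul_distrib]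
    ring
  rw [hsplit, neg_neg_iff_pos]
  exact mul_pos (mul_pos (mul_pos (hw i) (hw j)) (sq_pos_of_neg (sub_neg.2 (ha hij))))
    (prod_pos hsameSide)

theorem eval_secularPoly_last_neg (ha : StrictMono a) (hw : ∀ j, 0 < w j) :
    (secularPoly a w).eval (a (Fin.last n)) < 0 := by
  rw [eval_secularPoly_node, neg_neg_iff_pos]
  refine mul_pos (hw _) (prod_pos fun l hl => sub_pos.2 (ha ?_))
  exact Fin.lt_last_iff_ne_last.2 (ne_of_mem_erase hl)

theorem exists_gt_eval_secularPoly_pos (a w : Fin (n + 1) → ℝ) (x : ℝ) :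
    ∃ y, x < y ∧ 0 < (secularPoly a w).eval y := by
  have htendsto := (secularPoly a w).tendsto_atTop_of_leadingCoeff_nonneg
    (by rw [degree_secularPoly]; exact WithBot.coe_pos.2 n.succ_pos)
    (by rw [(secularPoly_monic a w).leadingCoeff]; exact zero_le_one)
  exact ((Filter.eventually_gt_atTop x).and (htendsto.eventually_gt_atTop 0)).exists

theorem exists_strictMono_isRoot_secularPoly (ha : StrictMono a) (hw : ∀ j, 0 < w j) :
    ∃ r : Fin (n + 1) → ℝ, StrictMono r ∧ ∀ i, (secularPoly a w).IsRoot (r i) := by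
  have hcont : ∀ x y, ContinuousOn (fun z => (secularPoly a w).eval z) (Set.Icc x y) :=
    fun _ _ => (secularPoly a w).continuous.continuousOn
  have hgap : ∀ k : Fin n, ∃ x ∈ Set.Ioo (a k.castSucc) (a k.succ), (secularPoly a w).IsRoot x :=
    fun k => exists_mem_Ioo_eq_zero_of_mul_neg (ha Fin.castSucc_lt_succ).le (hcont _ _)
      (eval_secularPoly_castSucc_mul_eval_succ_neg ha hw k)
  have htop : ∃ x, a (Fin.last n) < x ∧ (secularPoly a w).IsRoot x := by
    obtain ⟨y, hy, hpos⟩ := exists_gt_eval_secularPoly_pos a w (a (Fin.last n))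
    obtain ⟨x, hx, hroot⟩ := exists_mem_Ioo_eq_zero_of_mul_neg hy.le (hcont _ _)
      (mul_neg_of_neg_of_pos (eval_secularPoly_last_neg ha hw) hpos)
    exact ⟨x, hx.1, hroot⟩
  choose g hg using hgap
  obtain ⟨t, ht⟩ := htop
  set r : Fin (n + 1) → ℝ := Fin.snoc g t
  have hr : ∀ i, a i < r i ∧ (secularPoly a w).IsRoot (r i) := by
    intro i
    induction i using Fin.lastCases with
    | last => simpa [r] using ht
    | cast k => simpa [r] using ⟨(hg k).1.1, (hg k).2⟩
  refine ⟨r, Fin.strictMono_iff_lt_succ.2 fun k => ?_, fun i => (hr i).2⟩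
  calc r k.castSucc = g k := by simp [r]
    _ < a k.succ := (hg k).1.2
    _ < r k.succ := (hr k.succ).1

end Interlacing

theorem card_roots_toFinset_secularPoly {m : ℕ} {a w : Fin m → ℝ} (ha : StrictMono a)
    (hw : ∀ j, 0 < w j) : (secularPoly a w).roots.toFinset.card = m := by
  refine le_antisymm ?_ ?_
  · calc _ ≤ Multiset.card (secularPoly a w).roots := Multiset.toFinset_card_le _
      _ ≤ (secularPoly a w).natDegree := card_roots' _
      _ = m := natDegree_secularPoly a w
  · cases m with
    | zero => exact Nat.zero_le _
    | succ n =>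
      obtain ⟨r, hr, hroot⟩ := exists_strictMono_isRoot_secularPoly ha hw
      calc n + 1 = (univ.image r).card := by
            rw [card_image_of_injective _ hr.injective, card_univ, Fintype.card_fin]
        _ ≤ _ := card_le_card fun x hx => by
          obtain ⟨i, -, rfl⟩ := mem_image.1 hx
          exact Multiset.mem_toFinset.2 ((mem_roots (secularPoly_monic a w).ne_zero).2 (hroot i))

theorem eval_zero_secularPoly_ne_zero {m : ℕ} {a w : Fin m → ℝ} (ha : ∀ j, 0 < a j)
    (hw : ∀ j, 0 ≤ w j) : (secularPoly a w).eval 0 ≠ 0 := by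
  rw [eval_secularPoly_of_ne a w fun j => (ha j).ne]
  refine mul_ne_zero (prod_ne_zero_iff.2 fun j _ => sub_ne_zero.2 (ha j).ne) ?_
  simp only [sub_zero]
  exact (add_pos_of_pos_of_nonneg one_pos (sum_nonneg fun j _ => div_nonneg (hw j) (ha j).le)).ne'

theorem spectrum_eq_image_of_charpoly_eq_X_mul {ι : Type*} [Fintype ι] [DecidableEq ι]
    {A : Matrix ι ι ℂ} {p : ℝ[X]} (hp : p.Monic) (hroots : p.roots.toFinset.card = p.natDegree)
    (hA : A.charpoly = X * p.map (algebraMap ℝ ℂ)) :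
    spectrum ℂ A = (fun x : ℝ => (x : ℂ)) '' insert 0 (p.roots.toFinset : Set ℝ) := by
  have hcard : Multiset.card p.roots = p.natDegree :=
    le_antisymm (card_roots' p) (hroots ▸ Multiset.toFinset_card_le _)
  have hmap := hp.roots_map_of_card_eq_natDegree (algebraMap ℝ ℂ) hcard
  ext z
  rw [mem_spectrum_iff_isRoot_charpoly, hA, IsRoot, eval_mul, eval_X, mul_eq_zero,
    ← IsRoot, ← mem_roots (hp.map _).ne_zero, ← hmap]
  simp [eq_comm]

theorem matrix_AN_eigenvalues_general
    (m : ℕ) (α : Fin m → ℝ) (b : Fin (m + 1) → ℝ) (c : Fin m → ℝ)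
    (hαpos : ∀ j, 0 < α j) (hαmono : StrictMono α) (hbpos : ∀ j, 0 < b j)
    (hc : ∀ j, c j = b j.succ / b 0)
    (A : Matrix (Fin (m + 1)) (Fin (m + 1)) ℂ)
    (hA00 : A 0 0 = ∑ k : Fin m, (α k : ℂ) * (b k.succ : ℂ) * (b 0 : ℂ)⁻¹)
    (hA0j : ∀ j : Fin m, A 0 j.succ = -((α j : ℂ) * (b j.succ : ℂ) * (b 0 : ℂ)⁻¹))
    (hAj0 : ∀ j : Fin m, A j.succ 0 = -(α j : ℂ))
    (hAjj : ∀ j : Fin m, A j.succ j.succ = (α j : ℂ))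
    (hAji : ∀ i j : Fin m, i ≠ j → A j.succ i.succ = 0) :
    (spectrum ℂ A).ncard = m + 1 ∧
    spectrum ℂ A = (fun x : ℝ => (x : ℂ)) ''
      ({0} ∪ {lam : ℝ | (∀ j, lam ≠ α j) ∧ 1 + ∑ i, c i * α i / (α i - lam) = 0}) := by
  set w : Fin m → ℝ := fun j => c j * α j
  have hw : ∀ j, 0 < w j := fun j =>
    mul_pos (by rw [hc]; exact div_pos (hbpos _) (hbpos 0)) (hαpos j)
  have hwC : ∀ j, (α j : ℂ) * b j.succ * (b 0 : ℂ)⁻¹ = (w j : ℂ) := fun j => by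
    simp only [w, hc]
    push_cast
    ring
  have hA : A.charpoly = X * (secularPoly α w).map (algebraMap ℝ ℂ) := by
    rw [map_secularPoly]
    exact charpoly_arrowhead _ _ A (by simp [hA00, hwC]) (by simp [hA0j, hwC]) hAj0 hAjj hAji
  have hroots := card_roots_toFinset_secularPoly hαmono hw
  have hF : {lam : ℝ | (∀ j, lam ≠ α j) ∧ 1 + ∑ i, c i * α i / (α i - lam) = 0} =
      (secularPoly α w).roots.toFinset := by
    ext x
    rw [Finset.mem_coe, Multiset.mem_toFinset, mem_roots (secularPoly_monic α w).ne_zero,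
      isRoot_secularPoly_iff hαmono.injective fun j => (hw j).ne']
    rfl
  have h0 : (0 : ℝ) ∉ (secularPoly α w).roots.toFinset := by
    simpa [mem_roots (secularPoly_monic α w).ne_zero] using
      eval_zero_secularPoly_ne_zero hαpos fun j => (hw j).le
  have hspec := spectrum_eq_image_of_charpoly_eq_X_mul (secularPoly_monic α w)
    (hroots.trans (natDegree_secularPoly α w).symm) hA
  refine ⟨?_, by rw [hspec, hF, Set.singleton_union]⟩
  rw [hspec, Set.ncard_image_of_injective _ Complex.ofReal_injective,
    Set.ncard_insert_of_notMem h0, Set.ncard_coe_finset, hroots]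

theorem matrix_AN_eigenvalues
    (m : ℕ) (hm : 1 ≤ m) (α : Fin m → ℝ) (b : Fin (m + 1) → ℝ) (c : Fin m → ℝ)
    (hαpos : ∀ j, 0 < α j) (hαmono : StrictMono α) (hbpos : ∀ j, 0 < b j)
    (hc : ∀ j, c j = b j.succ / b 0)
    (A : Matrix (Fin (m + 1)) (Fin (m + 1)) ℂ)
    (hA00 : A 0 0 = ∑ k : Fin m, (α k : ℂ) * (b k.succ : ℂ) * (b 0 : ℂ)⁻¹)
    (hA0j : ∀ j : Fin m, A 0 j.succ = -((α j : ℂ) * (b j.succ : ℂ) * (b 0 : ℂ)⁻¹))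
    (hAj0 : ∀ j : Fin m, A j.succ 0 = -(α j : ℂ))
    (hAjj : ∀ j : Fin m, A j.succ j.succ = (α j : ℂ))
    (hAji : ∀ i j : Fin m, i ≠ j → A j.succ i.succ = 0) :
    (spectrum ℂ A).ncard = m + 1 ∧
    spectrum ℂ A = (fun x : ℝ => (x : ℂ)) ''
      ({0} ∪ {lam : ℝ | (∀ j, lam ≠ α j) ∧ 1 + ∑ i, c i * α i / (α i - lam) = 0}) :=
  matrix_AN_eigenvalues_general m α b c hαpos hαmono hbpos hc A hA00 hA0j hAj0 hAjj hAji
end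

section
/- Let m ≥ 1 and let α̃_1, ..., α̃_m, β̃_1, ..., β̃_m be positive real numbers satisfying the interlacing conditions α̃_j < β̃_j < α̃_{j+1} for j ∈ {1, ..., m−1} and α̃_m < β̃_m < ∞. Then the linear system of m equations in the unknowns ρ_1, ..., ρ_m ∈ ℝ given by 1 + Σ_{j=1}^m ρ_j · α̃_j/(α̃_j − β̃_k) = 0 for k = 1, ..., m has a unique solution, and this solution is given explicitly by ρ_j = ((β̃_j − α̃_j)/α̃_j) · Π_{i ∈ {1,...,m}, i ≠ j} ((β̃_i − α̃_j)/(α̃_i − α̃_j)) for j ∈ {1, ..., m}. -/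
/-!
Write `A = ∏ᵢ (X - α̃ᵢ)` and `B = ∏ᵢ (X - β̃ᵢ)`. Both are monic of degree `m`, so `B - A` has
degree `< m` and Lagrange interpolation at the nodes `α̃ⱼ` gives the partial fraction expansion
`B(x) / A(x) - 1 = ∑ⱼ wⱼ B(α̃ⱼ) / (x - α̃ⱼ)`, with `wⱼ = ∏_{i ≠ j} (α̃ⱼ - α̃ᵢ)⁻¹` the barycentric
weights. At `x = β̃ₖ` the left side is `-1`, and `-wⱼ B(α̃ⱼ)` is the stated value of `ρⱼ α̃ⱼ`.
Uniqueness is the invertibility of the Cauchy matrix `(1 / (α̃ⱼ - β̃ₖ))`: `A(x) ∑ⱼ dⱼ / (x - α̃ⱼ)`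
is a polynomial of degree `< m`, so if it vanishes at the `m` points `β̃ₖ` it is zero, and its
value `dⱼ / wⱼ` at `α̃ⱼ` vanishes.
-/

open Finset Polynomial Lagrange

structure Interlaced {R : Type*} [Preorder R] {m : ℕ} (α β : Fin m → R) : Prop where
  lt : ∀ j, α j < β j
  lt_succ : ∀ (j : Fin m) (hj : (j : ℕ) + 1 < m), β j < α ⟨(j : ℕ) + 1, hj⟩

namespace Interlaced

variable {R : Type*} [Preorder R] {m : ℕ} {α β : Fin m → R}

theorem right_lt_left (h : Interlaced α β) {j k : Fin m} (hjk : j < k) : β j < α k := by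
  obtain ⟨k, hk⟩ := k
  induction k with
  | zero => exact absurd (Fin.lt_def.mp hjk) (Nat.not_lt_zero _)
  | succ k ih =>
    have step := h.lt_succ ⟨k, by omega⟩ hk
    rcases (Nat.lt_succ_iff.mp (Fin.lt_def.mp hjk)).lt_or_eq with hlt | heq
    · exact (ih (by omega) hlt).trans ((h.lt _).trans step)
    · exact (Fin.ext heq : j = ⟨k, _⟩) ▸ step

theorem strictMono_left (h : Interlaced α β) : StrictMono α :=
  fun _ _ hjk => (h.lt _).trans (h.right_lt_left hjk)

theorem strictMono_right (h : Interlaced α β) : StrictMono β :=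
  fun _ _ hjk => (h.right_lt_left hjk).trans (h.lt _)

theorem right_ne_left (h : Interlaced α β) (j k : Fin m) : β k ≠ α j := by
  rcases lt_or_ge k j with hkj | hjk
  · exact (h.right_lt_left hkj).ne
  · exact ((h.strictMono_left.monotone hjk).trans_lt (h.lt k)).ne'

end Interlaced

namespace Lagrange

theorem degree_nodal_sub_nodal_lt {R ι : Type*} [CommRing R] [Nontrivial R] (s : Finset ι)
    (a b : ι → R) : (nodal s a - nodal s b).degree < #s := by
  have h := degree_sub_lt_left (p := nodal s a) (q := nodal s b)
    (by rw [degree_nodal, degree_nodal]) nodal_ne_zero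
    (by rw [nodal_monic.leadingCoeff, nodal_monic.leadingCoeff])
  rwa [degree_nodal] at h

variable {F ι : Type*} [Field F] [DecidableEq ι] {s : Finset ι} {a b : ι → F}

theorem neg_nodalWeight_mul_eval_nodal {j : ι} (hj : j ∈ s) :
    -(nodalWeight s a j * (nodal s b).eval (a j)) =
      (b j - a j) * ∏ i ∈ s.erase j, (b i - a j) / (a i - a j) := by
  rw [nodalWeight, eval_nodal, ← mul_prod_erase s _ hj, mul_left_comm, ← prod_mul_distrib,
    ← neg_mul, neg_sub]
  congr 1
  refine prod_congr rfl fun i _ => ?_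
  rw [← div_eq_inv_mul, ← neg_div_neg_eq, neg_sub, neg_sub]

theorem one_add_sum_div_sub_eq_zero (ha : Set.InjOn a s) (hab : ∀ j ∈ s, ∀ k ∈ s, b k ≠ a j)
    {k : ι} (hk : k ∈ s) :
    1 + ∑ j ∈ s, (b j - a j) * (∏ i ∈ s.erase j, (b i - a j) / (a i - a j)) / (a j - b k) = 0 := by
  have hbk : ∀ j ∈ s, b k ≠ a j := fun j hj => hab j hj k hk
  have hinterp := eq_interpolate_of_eval_eq (fun j => (nodal s b).eval (a j)) ha
    (degree_nodal_sub_nodal_lt s b a) fun j hj => by rw [eval_sub, eval_nodal_at_node hj, sub_zero]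
  have hsum : ∑ j ∈ s, nodalWeight s a j * (b k - a j)⁻¹ * (nodal s b).eval (a j) = -1 := by
    have key := congrArg (eval (b k)) hinterp
    rwa [eval_sub, eval_nodal_at_node hk, zero_sub, eval_interpolate_not_at_node _ hbk,
      ← mul_neg_one, mul_right_inj' (eval_nodal_not_at_node hbk), eq_comm] at key
  have hterm : ∀ j ∈ s, (b j - a j) * (∏ i ∈ s.erase j, (b i - a j) / (a i - a j)) / (a j - b k)
      = nodalWeight s a j * (b k - a j)⁻¹ * (nodal s b).eval (a j) := fun j hj => by
    rw [← neg_nodalWeight_mul_eval_nodal hj, neg_div, ← div_neg, neg_sub]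
    ring
  rw [sum_congr rfl hterm, hsum, add_neg_cancel]

theorem eq_zero_of_sum_div_sub_eq_zero (ha : Set.InjOn a s) (hb : Set.InjOn b s)
    (hab : ∀ j ∈ s, ∀ k ∈ s, b k ≠ a j) {d : ι → F}
    (hd : ∀ k ∈ s, ∑ j ∈ s, d j / (a j - b k) = 0) {j : ι} (hj : j ∈ s) : d j = 0 := by
  have hf : interpolate s a (fun j => d j / nodalWeight s a j) = 0 := by
    refine eq_zero_of_degree_lt_of_eval_index_eq_zero s hb (degree_interpolate_lt _ ha)
      fun k hk => ?_
    have hterm : ∀ j ∈ s, nodalWeight s a j * (b k - a j)⁻¹ * (d j / nodalWeight s a j) =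
        -(d j / (a j - b k)) := fun j hj => by
      rw [← div_neg, neg_sub, mul_comm, ← mul_assoc, div_mul_cancel₀ _ (nodalWeight_ne_zero ha hj),
        div_eq_mul_inv]
    rw [eval_interpolate_not_at_node _ fun j hj => hab j hj k hk, sum_congr rfl hterm,
      sum_neg_distrib, hd k hk, neg_zero, mul_zero]
  have := eval_interpolate_at_node (fun j => d j / nodalWeight s a j) ha hj
  rwa [hf, eval_zero, eq_comm, div_eq_zero_iff, or_iff_left (nodalWeight_ne_zero ha hj)] at this

end Lagrange

theorem linear_system_unique_solution_general
    (m : ℕ) (α β : Fin m → ℝ)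
    (hαpos : ∀ j, 0 < α j)
    (hαβ : ∀ j, α j < β j)
    (hβα : ∀ (j : Fin m) (hj : (j : ℕ) + 1 < m), β j < α ⟨(j : ℕ) + 1, hj⟩)
    (ρ : Fin m → ℝ)
    (hρ : ∀ j, ρ j = (β j - α j) / α j *
      ∏ i ∈ Finset.univ.erase j, (β i - α j) / (α i - α j)) :
    (∀ k, 1 + ∑ j, ρ j * α j / (α j - β k) = 0) ∧
    ∀ ρ' : Fin m → ℝ, (∀ k, 1 + ∑ j, ρ' j * α j / (α j - β k) = 0) → ρ' = ρ := by
  have h : Interlaced α β := ⟨hαβ, hβα⟩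
  have hα := h.strictMono_left.injective.injOn (s := ↑(univ : Finset (Fin m)))
  have hβ := h.strictMono_right.injective.injOn (s := ↑(univ : Finset (Fin m)))
  have hne : ∀ j ∈ univ, ∀ k ∈ univ, β k ≠ α j := fun j _ k _ => h.right_ne_left j k
  have hρα : ∀ j, ρ j * α j = (β j - α j) * ∏ i ∈ univ.erase j, (β i - α j) / (α i - α j) :=
    fun j => by rw [hρ, div_mul_eq_mul_div, div_mul_cancel₀ _ (hαpos j).ne']
  have hsol : ∀ k, 1 + ∑ j, ρ j * α j / (α j - β k) = 0 := fun k => by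
    simpa only [hρα] using one_add_sum_div_sub_eq_zero hα hne (mem_univ k)
  refine ⟨hsol, fun ρ' hρ' => funext fun j => ?_⟩
  have hdiff : ∀ k ∈ univ, ∑ j, (ρ' j - ρ j) * α j / (α j - β k) = 0 := fun k _ => by
    simp only [sub_mul, sub_div, sum_sub_distrib]
    linarith [hρ' k, hsol k]
  have hj := eq_zero_of_sum_div_sub_eq_zero hα hβ hne hdiff (mem_univ j)
  exact sub_eq_zero.mp ((mul_eq_zero.mp hj).resolve_right (hαpos j).ne')

theorem linear_system_unique_solution
    (m : ℕ) (hm : 1 ≤ m) (α β : Fin m → ℝ)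
    (hαpos : ∀ j, 0 < α j) (hβpos : ∀ j, 0 < β j)
    (hαβ : ∀ j, α j < β j)
    (hβα : ∀ (j : Fin m) (hj : (j : ℕ) + 1 < m), β j < α ⟨(j : ℕ) + 1, hj⟩)
    (ρ : Fin m → ℝ)
    (hρ : ∀ j, ρ j = (β j - α j) / α j *
      ∏ i ∈ Finset.univ.erase j, (β i - α j) / (α i - α j)) :
    (∀ k, 1 + ∑ j, ρ j * α j / (α j - β k) = 0) ∧
    ∀ ρ' : Fin m → ℝ, (∀ k, 1 + ∑ j, ρ' j * α j / (α j - β k) = 0) → ρ' = ρ :=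
  linear_system_unique_solution_general m α β hαpos hαβ hβα ρ hρ
end

section
/- Let m ≥ 1 and let α̃_1, ..., α̃_m, β̃_1, ..., β̃_m be positive real numbers satisfying the interlacing conditions α̃_j < β̃_j < α̃_{j+1} for j ∈ {1, ..., m−1} and α̃_m < β̃_m < ∞. Then there exist positive real numbers c_1, ..., c_m such that the function F(λ) = 1 + Σ_{j=1}^m c_j α̃_j/(α̃_j − λ), defined for λ ∈ ℝ \ {α̃_1, ..., α̃_m}, has zero set exactly {β̃_1, ..., β̃_m}, i.e. {λ ∈ ℝ \ {α̃_1, ..., α̃_m} : F(λ) = 0} = {β̃_1, ..., β̃_m}. -/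
/-!
Let `P = ∏ (X - β k)` and `Q = ∏ (X - α k)`. Both are monic of degree `m`, so `P - Q` has degree
`< m` and Lagrange interpolation at the nodes `α` gives the partial fraction expansion
`P(λ)/Q(λ) = 1 + ∑ j, r j / (λ - α j)` with `r j = P(α j) / ∏_{k ≠ j} (α j - α k)`.
Interlacing makes every quotient `(α j - β k) / (α j - α k)` with `k ≠ j` positive, while
`α j - β j < 0`; hence `r j < 0`, and `c j = -r j / α j > 0` turns `F` into `P/Q`, whose zeros
off the poles are exactly the `β k`.
-/

open Polynomial Finset Lagrange

namespace Lagrange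

variable {F ι : Type*} [Field F] [DecidableEq ι] {s : Finset ι} {v : ι → F}

theorem eval_div_eval_nodal_eq_one_add_sum {P : F[X]} (hP : P.Monic) (hdeg : P.natDegree = #s)
    (hvs : Set.InjOn v s) {x : F} (hx : ∀ i ∈ s, x ≠ v i) :
    eval x P / eval x (nodal s v) =
      1 + ∑ i ∈ s, nodalWeight s v i * eval (v i) P / (x - v i) := by
  have hPdeg : P.degree = #s := by rw [degree_eq_natDegree hP.ne_zero, hdeg]
  have hdeg_sub : (P - nodal s v).degree < #s := hPdeg ▸
    degree_sub_lt_left (hPdeg.trans degree_nodal.symm) hP.ne_zero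
      (by rw [hP.leadingCoeff, nodal_monic.leadingCoeff])
  have hinterp := congrArg (eval x) (eq_interpolate hvs hdeg_sub)
  rw [eval_interpolate_not_at_node _ hx, eval_sub] at hinterp
  have hN := eval_nodal_not_at_node hx
  rw [div_eq_iff hN, add_mul, one_mul, add_comm, ← sub_eq_iff_eq_add, hinterp, sum_mul, mul_sum]
  refine sum_congr rfl fun i hi => ?_
  rw [eval_sub, eval_nodal_at_node hi, sub_zero]
  ring

end Lagrange

structure Interlacing {ι K : Type*} [Preorder ι] [Preorder K] (α β : ι → K) : Prop where
  strictMono : StrictMono α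
  lt : ∀ j, α j < β j
  lt_of_lt : ∀ ⦃k j⦄, k < j → β k < α j

namespace Interlacing

variable {ι K : Type*} [LinearOrder ι] {α β : ι → K}

theorem ne [Preorder K] (h : Interlacing α β) (k j : ι) : β k ≠ α j := by
  rcases lt_or_ge k j with hkj | hjk
  · exact (h.lt_of_lt hkj).ne
  · exact ((h.strictMono.monotone hjk).trans_lt (h.lt k)).ne'

variable [Field K] [LinearOrder K] [IsStrictOrderedRing K]

theorem div_pos (h : Interlacing α β) {j k : ι} (hkj : k ≠ j) :
    0 < (α j - β k) / (α j - α k) := by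
  rcases hkj.lt_or_gt with hkj | hjk
  · exact _root_.div_pos (sub_pos.2 (h.lt_of_lt hkj)) (sub_pos.2 (h.strictMono hkj))
  · exact div_pos_of_neg_of_neg (sub_neg.2 ((h.strictMono hjk).trans (h.lt k)))
      (sub_neg.2 (h.strictMono hjk))

theorem nodalWeight_mul_eval_nodal_neg [Fintype ι] [DecidableEq ι] (h : Interlacing α β)
    (j : ι) : nodalWeight univ α j * eval (α j) (nodal univ β) < 0 := by
  have hsplit : nodalWeight univ α j * eval (α j) (nodal univ β) =
      (α j - β j) * ∏ k ∈ univ.erase j, (α j - β k) / (α j - α k) := by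
    rw [nodalWeight, eval_nodal, ← mul_prod_erase univ _ (mem_univ j)]
    simp_rw [div_eq_mul_inv, prod_mul_distrib]
    ring
  rw [hsplit]
  exact mul_neg_of_neg_of_pos (sub_neg.2 (h.lt j))
    (prod_pos fun k hk => h.div_pos (ne_of_mem_erase hk))

end Interlacing

theorem Fin.interlacing_of_lt_succ {K : Type*} [Preorder K] {m : ℕ} {α β : Fin m → K}
    (hαβ : ∀ j, α j < β j)
    (hβα : ∀ (j : Fin m) (hj : (j : ℕ) + 1 < m), β j < α ⟨(j : ℕ) + 1, hj⟩) :
    Interlacing α β := by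
  cases m with
  | zero => exact ⟨fun i => i.elim0, fun i => i.elim0, fun i => i.elim0⟩
  | succ n =>
    have hmono : StrictMono α :=
      Fin.strictMono_iff_lt_succ.2 fun i => (hαβ _).trans (hβα i.castSucc (by simp))
    exact ⟨hmono, hαβ, fun k j hkj => (hβα k (by omega)).trans_le (hmono.monotone hkj)⟩

theorem exists_coefficients_with_prescribed_zeros_general
    (m : ℕ) (α β : Fin m → ℝ)
    (hαpos : ∀ j, 0 < α j)
    (hαβ : ∀ j, α j < β j)
    (hβα : ∀ (j : Fin m) (hj : (j : ℕ) + 1 < m), β j < α ⟨(j : ℕ) + 1, hj⟩) :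
    ∃ c : Fin m → ℝ, (∀ j, 0 < c j) ∧
      {lam : ℝ | (∀ j, lam ≠ α j) ∧ 1 + ∑ j, c j * α j / (α j - lam) = 0} =
        Set.range β := by
  have hI := Fin.interlacing_of_lt_succ hαβ hβα
  set r : Fin m → ℝ := fun j => nodalWeight univ α j * eval (α j) (nodal univ β)
  refine ⟨fun j => -r j / α j,
    fun j => _root_.div_pos (neg_pos.2 (hI.nodalWeight_mul_eval_nodal_neg j)) (hαpos j), ?_⟩
  have hF : ∀ x, (∀ j, x ≠ α j) → 1 + ∑ j, -r j / α j * α j / (α j - x) =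
      eval x (nodal univ β) / eval x (nodal univ α) := by
    intro x hx
    rw [eval_div_eval_nodal_eq_one_add_sum nodal_monic natDegree_nodal
      hI.strictMono.injective.injOn fun i _ => hx i]
    congr 1
    refine sum_congr rfl fun j _ => ?_
    field_simp [(hαpos j).ne', sub_ne_zero.2 (hx j), sub_ne_zero.2 (hx j).symm]
    ring
  ext x
  simp only [Set.mem_ofPred_eq, Set.mem_range]
  constructor
  · rintro ⟨hx, hzero⟩
    rw [hF x hx, div_eq_zero_iff, or_iff_left (eval_nodal_not_at_node fun i _ => hx i),
      eval_nodal, prod_eq_zero_iff] at hzero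
    obtain ⟨k, -, hk⟩ := hzero
    exact ⟨k, (sub_eq_zero.1 hk).symm⟩
  · rintro ⟨k, rfl⟩
    refine ⟨hI.ne k, ?_⟩
    rw [hF _ (hI.ne k), eval_nodal_at_node (mem_univ k), zero_div]

theorem exists_coefficients_with_prescribed_zeros
    (m : ℕ) (hm : 1 ≤ m) (α β : Fin m → ℝ)
    (hαpos : ∀ j, 0 < α j) (hβpos : ∀ j, 0 < β j)
    (hαβ : ∀ j, α j < β j)
    (hβα : ∀ (j : Fin m) (hj : (j : ℕ) + 1 < m), β j < α ⟨(j : ℕ) + 1, hj⟩) :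
    ∃ c : Fin m → ℝ, (∀ j, 0 < c j) ∧
      {lam : ℝ | (∀ j, lam ≠ α j) ∧ 1 + ∑ j, c j * α j / (α j - lam) = 0} =
        Set.range β :=
  exists_coefficients_with_prescribed_zeros_general m α β hαpos hαβ hβα
end

section
/- Let n ≥ 1 and m ≥ 1 be integers and let τ_1, ..., τ_m be positive real numbers with Σ_{j=1}^m τ_j < 1. Then there exist axis-parallel open rectangular boxes F_1, ..., F_m in ℝ^n (each F_j being a product of n nonempty bounded open intervals) such that the closures of the F_j's are pairwise disjoint and all contained in the open unit cube (0,1)^n, and the n-dimensional Lebesgue measure of F_j equals τ_j for every j ∈ {1, ..., m}. -/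
/-!
Slice the unit cube along the first coordinate. Pick a side `s < 1` with `∑ τ_j < s ^ (n - 1)`; the
box `F_j` is a slab `[x_j, x_j + ℓ_j] × [(1 - s) / 2, (1 + s) / 2] ^ (n - 1)` with
`ℓ_j = τ_j / s ^ (n - 1)`. Then `∑ ℓ_j < 1`, so the closed intervals `[x_j, x_j + ℓ_j]` can be laid
side by side inside `(0, 1)`, separated by equal gaps.
-/

open MeasureTheory Set Filter Topology Function

theorem exists_mem_Ioo_lt_pow {S : ℝ} (hS : S < 1) (k : ℕ) :
    ∃ s ∈ Ioo (0 : ℝ) 1, S < s ^ k := by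
  have hpow : Tendsto (fun s : ℝ => s ^ k) (𝓝[<] 1) (𝓝 1) := by
    simpa using ((continuous_pow k).tendsto (1 : ℝ)).mono_left nhdsWithin_le_nhds
  have hmem : ∀ᶠ s in 𝓝[<] (1 : ℝ), s ∈ Ioo 0 1 := Ioo_mem_nhdsLT zero_lt_one
  exact (hmem.and (hpow.eventually_const_lt hS)).exists

theorem exists_pairwise_disjoint_Icc_subset_Ioo {ι : Type*} [LinearOrder ι]
    [LocallyFiniteOrderBot ι] [Fintype ι] {ℓ : ι → ℝ} (hℓ : ∀ i, 0 ≤ ℓ i)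
    (hsum : ∑ i, ℓ i < 1) :
    ∃ x : ι → ℝ, (∀ i, Icc (x i) (x i + ℓ i) ⊆ Ioo 0 1) ∧
      Pairwise (Disjoint on fun i => Icc (x i) (x i + ℓ i)) := by
  set g : ℝ := (1 - ∑ i, ℓ i) / (Fintype.card ι + 1) with hg_def
  have hg : 0 < g := div_pos (by linarith) (by positivity)
  have hstep : ∀ i, 0 ≤ g + ℓ i := fun i => by linarith [hℓ i]
  -- `x j` is the left end of the `j`-th interval when each interval is preceded by a gap `g`
  set x : ι → ℝ := fun j => g + ∑ i ∈ Finset.Iio j, (g + ℓ i)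
  have hright : ∀ j, x j + ℓ j = ∑ i ∈ Finset.Iic j, (g + ℓ i) := fun j => by
    rw [← Finset.sum_Iio_add_eq_sum_Iic]; ring
  refine ⟨x, fun j => Icc_subset_Ioo ?_ ?_, (pairwise_disjoint_on _).2 fun j k hjk => ?_⟩
  · linarith [Finset.sum_nonneg fun i (_ : i ∈ Finset.Iio j) => hstep i]
  · have htotal : ∑ i, (g + ℓ i) = 1 - g := by
      rw [Finset.sum_add_distrib, Finset.sum_const, Finset.card_univ, nsmul_eq_mul, hg_def]
      field_simp
      ring
    calc x j + ℓ j = ∑ i ∈ Finset.Iic j, (g + ℓ i) := hright j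
      _ ≤ ∑ i, (g + ℓ i) :=
        Finset.sum_le_sum_of_subset_of_nonneg (Finset.subset_univ _) fun i _ _ => hstep i
      _ < 1 := by linarith
  · have hgap : x j + ℓ j < x k := by
      have hsub : Finset.Iic j ⊆ Finset.Iio k := fun i hi =>
        Finset.mem_Iio.2 ((Finset.mem_Iic.1 hi).trans_lt hjk)
      rw [hright]
      linarith [Finset.sum_le_sum_of_subset_of_nonneg hsub fun i _ _ => hstep i]
    exact Set.disjoint_left.2 fun y hyj hyk => by linarith [hyj.2, hyk.1]

theorem closure_univ_pi_Ioo {ι : Type*} {a b : ι → ℝ} (h : ∀ i, a i < b i) :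
    closure (univ.pi fun i => Ioo (a i) (b i)) = univ.pi fun i => Icc (a i) (b i) := by
  simp only [closure_pi_set, closure_Ioo (h _).ne]

theorem exists_slabs_in_unit_cube {ι : Type*} [LinearOrder ι] [LocallyFiniteOrderBot ι]
    [Fintype ι] (d : ℕ) {s : ℝ} (hs : s ∈ Ioo (0 : ℝ) 1) {ℓ : ι → ℝ} (hℓ : ∀ j, 0 < ℓ j)
    (hsum : ∑ j, ℓ j < 1) :
    ∃ a b : ι → Fin (d + 1) → ℝ, (∀ j i, a j i < b j i) ∧
      (∀ j, (univ.pi fun i => Icc (a j i) (b j i)) ⊆ univ.pi fun _ => Ioo 0 1) ∧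
      Pairwise (Disjoint on fun j => univ.pi fun i => Icc (a j i) (b j i)) ∧
      ∀ j, volume (univ.pi fun i => Ioo (a j i) (b j i)) = ENNReal.ofReal (ℓ j * s ^ d) := by
  obtain ⟨hs0, hs1⟩ := hs
  obtain ⟨x, hx01, hxdisj⟩ := exists_pairwise_disjoint_Icc_subset_Ioo (fun j => (hℓ j).le) hsum
  set a : ι → Fin (d + 1) → ℝ := fun j => Fin.cons (x j) fun _ => (1 - s) / 2
  set b : ι → Fin (d + 1) → ℝ := fun j => Fin.cons (x j + ℓ j) fun _ => (1 + s) / 2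
  refine ⟨a, b, fun j i => ?_, fun j => pi_mono fun i _ => ?_, fun j k hjk => ?_, fun j => ?_⟩
  · cases i using Fin.cases <;> simp only [a, b, Fin.cons_zero, Fin.cons_succ] <;> linarith [hℓ j]
  · cases i using Fin.cases
    · exact hx01 j
    · exact Icc_subset_Ioo (by simp only [a, Fin.cons_succ]; linarith)
        (by simp only [b, Fin.cons_succ]; linarith)
  · exact disjoint_univ_pi.2 ⟨0, by simpa [a, b] using hxdisj hjk⟩
  · have hside : (1 + s) / 2 - (1 - s) / 2 = s := by ring
    rw [Real.volume_pi_Ioo, Fin.prod_univ_succ]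
    simp only [a, b, Fin.cons_zero, Fin.cons_succ, add_sub_cancel_left, hside, Finset.prod_const,
      Finset.card_univ, Fintype.card_fin, ← ENNReal.ofReal_pow hs0.le,
      ← ENNReal.ofReal_mul (hℓ j).le]

theorem exists_boxes_with_prescribed_volumes_general
    (n m : ℕ) (hn : 1 ≤ n)
    (τ : Fin m → ℝ) (hτ : ∀ j, 0 < τ j) (hsum : ∑ j, τ j < 1) :
    ∃ a b : Fin m → Fin n → ℝ,
      (∀ j i, a j i < b j i) ∧
      (∀ j, closure (Set.univ.pi fun i => Set.Ioo (a j i) (b j i)) ⊆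
        Set.univ.pi fun _ => Set.Ioo (0 : ℝ) 1) ∧
      (Pairwise fun j k =>
        Disjoint (closure (Set.univ.pi fun i => Set.Ioo (a j i) (b j i)))
          (closure (Set.univ.pi fun i => Set.Ioo (a k i) (b k i)))) ∧
      (∀ j, volume (Set.univ.pi fun i => Set.Ioo (a j i) (b j i)) =
        ENNReal.ofReal (τ j)) := by
  obtain ⟨d, rfl⟩ : ∃ d, n = d + 1 := ⟨n - 1, by omega⟩
  obtain ⟨s, hs, hSs⟩ := exists_mem_Ioo_lt_pow hsum d
  have hsd : 0 < s ^ d := pow_pos hs.1 d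
  have hℓsum : ∑ j, τ j / s ^ d < 1 := by rwa [← Finset.sum_div, div_lt_one hsd]
  obtain ⟨a, b, hab, hsub, hdisj, hvol⟩ :=
    exists_slabs_in_unit_cube d hs (fun j => div_pos (hτ j) hsd) hℓsum
  have hcl j := closure_univ_pi_Ioo (hab j)
  refine ⟨a, b, hab, fun j => (hcl j).trans_subset (hsub j), fun j k hjk => ?_, fun j => ?_⟩
  · simpa only [hcl] using hdisj hjk
  · rw [hvol, div_mul_cancel₀ _ hsd.ne']

theorem exists_boxes_with_prescribed_volumes
    (n m : ℕ) (hn : 1 ≤ n) (hm : 1 ≤ m)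
    (τ : Fin m → ℝ) (hτ : ∀ j, 0 < τ j) (hsum : ∑ j, τ j < 1) :
    ∃ a b : Fin m → Fin n → ℝ,
      (∀ j i, a j i < b j i) ∧
      (∀ j, closure (Set.univ.pi fun i => Set.Ioo (a j i) (b j i)) ⊆
        Set.univ.pi fun _ => Set.Ioo (0 : ℝ) 1) ∧
      (Pairwise fun j k =>
        Disjoint (closure (Set.univ.pi fun i => Set.Ioo (a j i) (b j i)))
          (closure (Set.univ.pi fun i => Set.Ioo (a k i) (b k i)))) ∧
      (∀ j, volume (Set.univ.pi fun i => Set.Ioo (a j i) (b j i)) =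
        ENNReal.ofReal (τ j)) :=
  exists_boxes_with_prescribed_volumes_general n m hn τ hτ hsum
end
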